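/- arXiv:1508.05811 — 2 statements merged into one kernel-verified Lean document; each statement's English description precedes it below -/
import Mathlib

section
/- For the q-trapezoidal functional L(f) = ∫_a^b f(x) d_{1/q}x − ((b − aq)/[2]_q) f(a) − ((bq − a)/[2]_q) f(b), one has L(x²) = −(b − a)(bq − a)(b − aq)/[3]_q!. -/
/-- q-derivative: `D_q f(x) = (f(qx) - f x)/((q-1)x)`. -/
noncomputable def qDeriv (q : ℝ) (f : ℝ → ℝ) (x : ℝ) : ℝ :=
  (f (q * x) - f x) / ((q - 1) * x)

/-- Iterated q-derivative. -/
noncomputable def qIterDeriv (q : ℝ) (n : ℕ) (f : ℝ → ℝ) : ℝ → ℝ :=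
  (qDeriv q)^[n] f

/-- Jackson q-integral on `[0,b]`. -/
noncomputable def qInt0 (q b : ℝ) (f : ℝ → ℝ) : ℝ :=
  (1 - q) * b * ∑' i : ℕ, q ^ i * f (q ^ i * b)

/-- Jackson q-integral on `[a,b]`. -/
noncomputable def qInt (q a b : ℝ) (f : ℝ → ℝ) : ℝ :=
  qInt0 q b f - qInt0 q a f

/-- q-integer `[n]_q = 1 + q + ⋯ + q^(n-1)`. -/
noncomputable def qNat (q : ℝ) (n : ℕ) : ℝ :=
  ∑ k ∈ Finset.range n, q ^ k

/-- q-factorial `[n]_q!`. -/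
noncomputable def qFact (q : ℝ) (n : ℕ) : ℝ :=
  ∏ k ∈ Finset.range n, qNat q (k + 1)

/-- q-power `(x - t)^{n,q} = (x - q^{n-1} t) ⋯ (x - q t)(x - t)`. -/
noncomputable def qPow (q : ℝ) (n : ℕ) (x t : ℝ) : ℝ :=
  ∏ j ∈ Finset.range n, (x - q ^ j * t)

/-- Truncated q-power `(x - t)_+^{n,q} = (x - q^{n-1} t) ⋯ (x - q t)·max (x - t) 0`. -/
noncomputable def qPowPlus (q : ℝ) (n : ℕ) (x t : ℝ) : ℝ :=
  (∏ j ∈ Finset.Ico 1 n, (x - q ^ j * t)) * max (x - t) 0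

lemma qNat_mul_one_sub (r : ℝ) (n : ℕ) : qNat r n * (1 - r) = 1 - r ^ n := by
  rw [qNat, mul_comm, mul_neg_geom_sum]

lemma qInt0_pow {r : ℝ} (hr : |r| < 1) (c : ℝ) (n : ℕ) :
    qInt0 r c (fun x => x ^ n) = c ^ (n + 1) / qNat r (n + 1) := by
  have hrn : |r ^ (n + 1)| < 1 := by
    rw [abs_pow]; exact pow_lt_one₀ (abs_nonneg r) hr n.succ_ne_zero
  have h_one_sub : 1 - r ^ (n + 1) ≠ 0 := (sub_pos.mpr ((le_abs_self _).trans_lt hrn)).ne'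
  have h_one_sub_r : 1 - r ≠ 0 := (sub_pos.mpr ((le_abs_self r).trans_lt hr)).ne'
  have h_summand : (fun i : ℕ => r ^ i * (r ^ i * c) ^ n) = fun i => (r ^ (n + 1)) ^ i * c ^ n := by
    funext i; ring
  have h_qNat := qNat_mul_one_sub r (n + 1)
  have h_qNat_ne : qNat r (n + 1) ≠ 0 := fun h => h_one_sub (by rw [← h_qNat, h, zero_mul])
  rw [qInt0, h_summand, tsum_mul_right, tsum_geometric_of_abs_lt_one hrn, ← h_qNat]
  field_simp
  ring

lemma qInt_pow {r : ℝ} (hr : |r| < 1) (a b : ℝ) (n : ℕ) :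
    qInt r a b (fun x => x ^ n) = (b ^ (n + 1) - a ^ (n + 1)) / qNat r (n + 1) := by
  rw [qInt, qInt0_pow hr, qInt0_pow hr, sub_div]

theorem q_trapezoid_x_sq_general (q a b : ℝ) (hq : 1 < q) :
    qInt (1/q) a b (fun x => x^2) - (b - a*q)/(1+q) * a^2 - (b*q - a)/(1+q) * b^2
      = -((b - a) * (b*q - a) * (b - a*q)) / ((1 + q) * (1 + q + q^2)) := by
  have hq0 : 0 < q := one_pos.trans hq
  have h_inv : |1 / q| < 1 := by
    rw [abs_of_pos (by positivity), div_lt_one hq0]; exact hq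
  have h_qNat : qNat (1 / q) 3 = (1 + q + q ^ 2) / q ^ 2 := by
    simp only [qNat, Finset.sum_range_succ, Finset.sum_range_zero]
    field_simp
    ring
  rw [qInt_pow h_inv, h_qNat]
  field_simp
  ring

/-- value of the q-trapezoidal functional at `x²`:
`L(x²) = -(b-a)(bq-a)(b-aq)/[3]_q!`. -/
theorem q_trapezoid_x_sq (q a b : ℝ) (hq : 1 < q) (ha : 0 < a) (hab : a < b) :
    qInt (1/q) a b (fun x => x^2) - (b - a*q)/(1+q) * a^2 - (b*q - a)/(1+q) * b^2
      = -((b - a) * (b*q - a) * (b - a*q)) / ((1 + q) * (1 + q + q^2)) :=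
  q_trapezoid_x_sq_general q a b hq
end

section
/- The Peano kernel of the q-trapezoidal rule is K(t) = q·{∫_t^b (x − t) d_{1/q}x − ((bq − a)/[2]_q)(b − t)} = (q/[2]_q)(b − t)(a − t) for a ≤ t ≤ b; in particular K(t) ≤ 0 on [a,b]. -/
lemma qInt0_linear (r c t : ℝ) (hr0 : 0 ≤ r) (hr1 : r < 1) :
    (1 - r) * c * ∑' i : ℕ, r ^ i * (r ^ i * c - t) = c^2/(1+r) - c*t := by
  have h1 : |r| < 1 := by rw [abs_of_nonneg hr0]; exact hr1
  have h2 : |r^2| < 1 := by rw [abs_of_nonneg (sq_nonneg r)]; nlinarith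
  have hs1 : Summable (fun i : ℕ => r ^ i) := summable_geometric_of_lt_one hr0 hr1
  have hs2 : Summable (fun i : ℕ => (r^2) ^ i) :=
    summable_geometric_of_lt_one (sq_nonneg r) (by nlinarith)
  have key : ∑' i : ℕ, r ^ i * (r ^ i * c - t)
      = c * (1 - r^2)⁻¹ - t * (1-r)⁻¹ := by
    have : (fun i : ℕ => r ^ i * (r ^ i * c - t))
        = fun i : ℕ => c * (r^2) ^ i - t * r ^ i := by
      funext i; ring
    rw [this, Summable.tsum_sub (hs2.mul_left c) (hs1.mul_left t),
      tsum_mul_left, tsum_mul_left,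
      tsum_geometric_of_lt_one (sq_nonneg r) (by nlinarith),
      tsum_geometric_of_lt_one hr0 hr1]
  rw [key]
  have hne : (1:ℝ) - r ≠ 0 := by linarith
  have hne2 : (1:ℝ) + r ≠ 0 := by linarith
  have hne3 : (1:ℝ) - r^2 ≠ 0 := by nlinarith
  field_simp
  ring

/-- the Peano kernel of the q-trapezoidal rule is
`K(t) = q·(∫_t^b (x-t) d_{1/q}x − ((bq−a)/[2]_q)(b−t)) = (q/[2]_q)(b−t)(a−t) ≤ 0` on `[a,b]`. -/
theorem q_trapezoid_kernel (q a b : ℝ) (hq : 1 < q) (ha : 0 < a) (hab : a < b) :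
    ∀ t ∈ Set.Icc a b,
      (q * (qInt (1/q) t b (fun x => x - t) - (b*q - a)/(1+q) * (b - t))
          = q/(1+q) * (b - t) * (a - t))
      ∧ q/(1+q) * (b - t) * (a - t) ≤ 0 := by
  intro t ht
  obtain ⟨hta, htb⟩ := ht
  have hq0 : (0:ℝ) < q := by linarith
  have hr0 : (0:ℝ) ≤ 1/q := by positivity
  have hr1 : 1/q < 1 := by rw [div_lt_one hq0]; exact hq
  constructor
  · have hb := qInt0_linear (1/q) b t hr0 hr1
    have htt := qInt0_linear (1/q) t t hr0 hr1
    show q * ((1 - 1/q) * b * (∑' i : ℕ, (1/q) ^ i * ((1/q) ^ i * b - t))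
        - (1 - 1/q) * t * (∑' i : ℕ, (1/q) ^ i * ((1/q) ^ i * t - t))
        - (b*q - a)/(1+q) * (b - t)) = q/(1+q) * (b - t) * (a - t)
    rw [hb, htt]
    have hq' : q ≠ 0 := ne_of_gt hq0
    have h1q : (1:ℝ) + 1/q ≠ 0 := by positivity
    have h1q' : (1:ℝ) + q ≠ 0 := by positivity
    field_simp
    ring
  · have h1 : 0 < q/(1+q) := by positivity
    have h2 : 0 ≤ b - t := by linarith
    have h3 : a - t ≤ 0 := by linarith
    have := mul_nonneg (le_of_lt h1) h2
    exact mul_nonpos_of_nonneg_of_nonpos this h3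
end
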